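/- Let E_1, E_2, E_3 be complex Banach spaces and B : E_1 × E_2 → E_3 a continuous bilinear map with ‖B(x,y)‖ ≤ ‖x‖‖y‖ (a multiplication). Let 1 ≤ p, q, r ≤ ∞ satisfy 1/p + 1/q = 1 + 1/r and let s_1, s_2, s_3 ∈ ℝ satisfy s_1 + s_3 ≥ 0, s_2 + s_3 ≥ 0 and s_1 + s_2 ≥ 0. Then there is a constant C > 0 such that for all f ∈ L^p_{s_1}(ℝ^d, E_1) and g ∈ L^q_{s_2}(ℝ^d, E_2), the bilinear convolution (f ∗_B g)(x) = ∫_{ℝ^d} B(f(x−y), g(y)) dy is defined for almost every x ∈ ℝ^d, belongs to L^r_{−s_3}(ℝ^d, E_3), and ‖f ∗_B g‖_{L^r_{−s_3}(E_3)} ≤ C ‖f‖_{L^p_{s_1}(E_1)} ‖g‖_{L^q_{s_2}(E_2)}. -/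

import Mathlib

open scoped BigOperators Real NNReal ENNReal
open MeasureTheory
noncomputable section

/-- The weighted Lebesgue–Bochner "norm" `‖f‖_{L^p_s(E)}` (valued in `ℝ≥0∞`):
the `L^p` norm of `x ↦ ⟨x⟩^s f(x)`, where `⟨x⟩ = (1+|x|²)^{1/2}`. -/
def weightedLpNorm {d : ℕ} {E : Type*} [NormedAddCommGroup E] [NormedSpace ℝ E]
    (p : ℝ≥0∞) (s : ℝ) (f : EuclideanSpace ℝ (Fin d) → E) : ℝ≥0∞ :=
  eLpNorm (fun x => ((1 + ‖x‖ ^ 2) ^ (s / 2) : ℝ) • f x) p volume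



section weight
variable {V : Type*} [SeminormedAddCommGroup V]

private lemma one_le_n (z : V) : (1:ℝ) ≤ 1 + ‖z‖ ^ 2 := by
  have := sq_nonneg ‖z‖; linarith

private lemma n_add_le (u v : V) : 1 + ‖u + v‖ ^ 2 ≤ 2 * (1 + ‖u‖ ^ 2) * (1 + ‖v‖ ^ 2) := by
  have h := norm_add_le u v
  have h2 : ‖u + v‖ ^ 2 ≤ (‖u‖ + ‖v‖) ^ 2 := pow_le_pow_left₀ (norm_nonneg _) h 2
  nlinarith [sq_nonneg (‖u‖ - ‖v‖), sq_nonneg (‖u‖ * ‖v‖)]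

/-- Peetre-type weight inequality. -/
theorem weight_ineq {a b c : ℝ} (hca : c ≤ a) (hcb : c ≤ b) (hab : 0 ≤ a + b) :
    ∀ u v : V, (1 + ‖u + v‖ ^ 2) ^ c ≤
      2 ^ (|a| + |b| + |c|) * (1 + ‖u‖ ^ 2) ^ a * (1 + ‖v‖ ^ 2) ^ b := by
  intro u v
  set K := |a| + |b| + |c| with hK
  have hcK : c ≤ K := by
    have := abs_nonneg a; have := abs_nonneg b; have := le_abs_self c; linarith
  have hnaK : -a ≤ K := by
    have := abs_nonneg b; have := abs_nonneg c; have := neg_abs_le a; linarith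
  have hnbK : -b ≤ K := by
    have := abs_nonneg a; have := abs_nonneg c; have := neg_abs_le b; linarith
  have h0K : (0:ℝ) ≤ K := by positivity
  have hnu := one_le_n u
  have hnv := one_le_n v
  have hnuv := one_le_n (u + v)
  have hpu : (0:ℝ) < 1 + ‖u‖ ^ 2 := lt_of_lt_of_le one_pos hnu
  have hpv : (0:ℝ) < 1 + ‖v‖ ^ 2 := lt_of_lt_of_le one_pos hnv
  have hpuv : (0:ℝ) < 1 + ‖u + v‖ ^ 2 := lt_of_lt_of_le one_pos hnuv
  rcases le_or_gt 0 c with hc | hc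
  · have t1 : (2:ℝ) ^ c ≤ 2 ^ K := Real.rpow_le_rpow_of_exponent_le one_le_two hcK
    have t2 : (1 + ‖u‖ ^ 2) ^ c ≤ (1 + ‖u‖ ^ 2) ^ a :=
      Real.rpow_le_rpow_of_exponent_le hnu hca
    have t3 : (1 + ‖v‖ ^ 2) ^ c ≤ (1 + ‖v‖ ^ 2) ^ b :=
      Real.rpow_le_rpow_of_exponent_le hnv hcb
    calc (1 + ‖u + v‖ ^ 2) ^ c ≤ (2 * (1 + ‖u‖ ^ 2) * (1 + ‖v‖ ^ 2)) ^ c :=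
          Real.rpow_le_rpow (le_of_lt hpuv) (n_add_le u v) hc
    _ = 2 ^ c * (1 + ‖u‖ ^ 2) ^ c * (1 + ‖v‖ ^ 2) ^ c := by
          rw [Real.mul_rpow (by positivity) (le_of_lt hpv),
            Real.mul_rpow (by norm_num) (le_of_lt hpu)]
    _ ≤ 2 ^ K * (1 + ‖u‖ ^ 2) ^ a * (1 + ‖v‖ ^ 2) ^ b :=
          mul_le_mul (mul_le_mul t1 t2 (by positivity) (by positivity)) t3
            (by positivity) (by positivity)
  · rcases lt_or_ge a 0 with ha | ha
    · -- a < 0, b ≥ -a > 0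
      have key : (1 + ‖u + v‖ ^ 2) ^ c * (1 + ‖u‖ ^ 2) ^ (-a) ≤ 2 ^ K * (1 + ‖v‖ ^ 2) ^ b := by
        have h := n_add_le (u + v) (-v)
        have e : u + v + -v = u := by abel
        rw [e, norm_neg] at h
        have t1 : (2:ℝ) ^ (-a) ≤ 2 ^ K := Real.rpow_le_rpow_of_exponent_le one_le_two hnaK
        have t2 : (1 + ‖u + v‖ ^ 2) ^ (c + -a) ≤ 1 :=
          Real.rpow_le_one_of_one_le_of_nonpos hnuv (by linarith)
        have t3 : (1 + ‖v‖ ^ 2) ^ (-a) ≤ (1 + ‖v‖ ^ 2) ^ b :=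
          Real.rpow_le_rpow_of_exponent_le hnv (by linarith)
        calc (1 + ‖u + v‖ ^ 2) ^ c * (1 + ‖u‖ ^ 2) ^ (-a)
            ≤ (1 + ‖u + v‖ ^ 2) ^ c * (2 * (1 + ‖u + v‖ ^ 2) * (1 + ‖v‖ ^ 2)) ^ (-a) :=
              mul_le_mul_of_nonneg_left
                (Real.rpow_le_rpow (le_of_lt hpu) h (by linarith : (0:ℝ) ≤ -a))
                (by positivity)
          _ = 2 ^ (-a) * ((1 + ‖u + v‖ ^ 2) ^ c * (1 + ‖u + v‖ ^ 2) ^ (-a)) *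
                (1 + ‖v‖ ^ 2) ^ (-a) := by
              rw [Real.mul_rpow (by positivity) (le_of_lt hpv),
                Real.mul_rpow (by norm_num) (le_of_lt hpuv)]
              ring
          _ = 2 ^ (-a) * (1 + ‖u + v‖ ^ 2) ^ (c + -a) * (1 + ‖v‖ ^ 2) ^ (-a) := by
              rw [Real.rpow_add hpuv]
          _ ≤ 2 ^ K * 1 * (1 + ‖v‖ ^ 2) ^ b :=
              mul_le_mul (mul_le_mul t1 t2 (by positivity) (by positivity)) t3
                (by positivity) (by positivity)
          _ = 2 ^ K * (1 + ‖v‖ ^ 2) ^ b := by ring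
      have hxa : (1 + ‖u‖ ^ 2) ^ (-a) * (1 + ‖u‖ ^ 2) ^ a = 1 := by
        rw [← Real.rpow_add hpu]; simp
      calc (1 + ‖u + v‖ ^ 2) ^ c
          = (1 + ‖u + v‖ ^ 2) ^ c * (1 + ‖u‖ ^ 2) ^ (-a) * (1 + ‖u‖ ^ 2) ^ a := by
            rw [mul_assoc, hxa, mul_one]
        _ ≤ 2 ^ K * (1 + ‖v‖ ^ 2) ^ b * (1 + ‖u‖ ^ 2) ^ a :=
            mul_le_mul_of_nonneg_right key (by positivity)
        _ = 2 ^ K * (1 + ‖u‖ ^ 2) ^ a * (1 + ‖v‖ ^ 2) ^ b := by ring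
    · rcases lt_or_ge b 0 with hb | hb
      · -- b < 0, a ≥ -b > 0
        have key : (1 + ‖u + v‖ ^ 2) ^ c * (1 + ‖v‖ ^ 2) ^ (-b) ≤ 2 ^ K * (1 + ‖u‖ ^ 2) ^ a := by
          have h := n_add_le (u + v) (-u)
          have e : u + v + -u = v := by abel
          rw [e, norm_neg] at h
          have t1 : (2:ℝ) ^ (-b) ≤ 2 ^ K := Real.rpow_le_rpow_of_exponent_le one_le_two hnbK
          have t2 : (1 + ‖u + v‖ ^ 2) ^ (c + -b) ≤ 1 :=
            Real.rpow_le_one_of_one_le_of_nonpos hnuv (by linarith)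
          have t3 : (1 + ‖u‖ ^ 2) ^ (-b) ≤ (1 + ‖u‖ ^ 2) ^ a :=
            Real.rpow_le_rpow_of_exponent_le hnu (by linarith)
          calc (1 + ‖u + v‖ ^ 2) ^ c * (1 + ‖v‖ ^ 2) ^ (-b)
              ≤ (1 + ‖u + v‖ ^ 2) ^ c * (2 * (1 + ‖u + v‖ ^ 2) * (1 + ‖u‖ ^ 2)) ^ (-b) :=
                mul_le_mul_of_nonneg_left
                  (Real.rpow_le_rpow (le_of_lt hpv) h (by linarith : (0:ℝ) ≤ -b))
                  (by positivity)
            _ = 2 ^ (-b) * ((1 + ‖u + v‖ ^ 2) ^ c * (1 + ‖u + v‖ ^ 2) ^ (-b)) *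
                  (1 + ‖u‖ ^ 2) ^ (-b) := by
                rw [Real.mul_rpow (by positivity) (le_of_lt hpu),
                  Real.mul_rpow (by norm_num) (le_of_lt hpuv)]
                ring
            _ = 2 ^ (-b) * (1 + ‖u + v‖ ^ 2) ^ (c + -b) * (1 + ‖u‖ ^ 2) ^ (-b) := by
                rw [Real.rpow_add hpuv]
            _ ≤ 2 ^ K * 1 * (1 + ‖u‖ ^ 2) ^ a :=
                mul_le_mul (mul_le_mul t1 t2 (by positivity) (by positivity)) t3
                  (by positivity) (by positivity)
            _ = 2 ^ K * (1 + ‖u‖ ^ 2) ^ a := by ring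
        have hxb : (1 + ‖v‖ ^ 2) ^ (-b) * (1 + ‖v‖ ^ 2) ^ b = 1 := by
          rw [← Real.rpow_add hpv]; simp
        calc (1 + ‖u + v‖ ^ 2) ^ c
            = (1 + ‖u + v‖ ^ 2) ^ c * (1 + ‖v‖ ^ 2) ^ (-b) * (1 + ‖v‖ ^ 2) ^ b := by
              rw [mul_assoc, hxb, mul_one]
          _ ≤ 2 ^ K * (1 + ‖u‖ ^ 2) ^ a * (1 + ‖v‖ ^ 2) ^ b :=
              mul_le_mul_of_nonneg_right key (by positivity)
      · -- a, b ≥ 0, c < 0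
        have h1 : (1:ℝ) ≤ 2 ^ K := Real.one_le_rpow one_le_two h0K
        have h2 : (1:ℝ) ≤ (1 + ‖u‖ ^ 2) ^ a := Real.one_le_rpow hnu ha
        have h3 : (1:ℝ) ≤ (1 + ‖v‖ ^ 2) ^ b := Real.one_le_rpow hnv hb
        calc (1 + ‖u + v‖ ^ 2) ^ c ≤ 1 :=
              Real.rpow_le_one_of_one_le_of_nonpos hnuv (le_of_lt hc)
          _ = 1 * 1 * 1 := by ring
          _ ≤ 2 ^ K * (1 + ‖u‖ ^ 2) ^ a * (1 + ‖v‖ ^ 2) ^ b :=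
              mul_le_mul (mul_le_mul h1 h2 (by norm_num) (by positivity)) h3
                (by norm_num) (by positivity)
end weight


/-- The `L^t` "norm" of an `ℝ≥0∞`-valued function. -/
def eN {d : ℕ} (t : ℝ≥0∞) (h : EuclideanSpace ℝ (Fin d) → ℝ≥0∞) : ℝ≥0∞ :=
  if t = ∞ then essSup h volume else (∫⁻ x, h x ^ t.toReal) ^ (1 / t.toReal)

theorem eN_top {d : ℕ} (h : EuclideanSpace ℝ (Fin d) → ℝ≥0∞) :
    eN ∞ h = essSup h volume := if_pos rfl

theorem eN_ne_top {d : ℕ} {t : ℝ≥0∞} (ht : t ≠ ∞) (h : EuclideanSpace ℝ (Fin d) → ℝ≥0∞) :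
    eN t h = (∫⁻ x, h x ^ t.toReal) ^ (1 / t.toReal) := if_neg ht

theorem eN_one {d : ℕ} (h : EuclideanSpace ℝ (Fin d) → ℝ≥0∞) :
    eN 1 h = ∫⁻ x, h x := by
  rw [eN_ne_top ENNReal.one_ne_top]; simp

theorem lintegral_mul_rpow_le₃ {α : Type*} [MeasurableSpace α] {μ : Measure α}
    {f g h : α → ℝ≥0∞} (hf : AEMeasurable f μ) (hg : AEMeasurable g μ) (hh : AEMeasurable h μ)
    {a b c : ℝ} (ha : 0 ≤ a) (hb : 0 ≤ b) (hc : 0 ≤ c) (habc : a + b + c = 1) :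
    ∫⁻ x, f x ^ a * g x ^ b * h x ^ c ∂μ ≤
      (∫⁻ x, f x ∂μ) ^ a * (∫⁻ x, g x ∂μ) ^ b * (∫⁻ x, h x ∂μ) ^ c := by
  have H := ENNReal.lintegral_prod_norm_pow_le (μ := μ) (Finset.univ : Finset (Fin 3))
    (f := ![f, g, h]) (p := ![a, b, c]) ?_ ?_ ?_
  · simpa [Fin.prod_univ_three] using H
  · intro i _; fin_cases i <;> simpa
  · simp [Fin.sum_univ_three, habc]
  · intro i _; fin_cases i <;> simpa

/-- Young's convolution inequality at the level of `ℝ≥0∞`-valued lintegrals. -/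
theorem young_conv {d : ℕ} {p q r : ℝ≥0∞} (hp : 1 ≤ p) (hq : 1 ≤ q) (hr : 1 ≤ r)
    (hpqr : 1/p + 1/q = 1 + 1/r)
    {φ ψ : EuclideanSpace ℝ (Fin d) → ℝ≥0∞} (hφ : Measurable φ) (hψ : Measurable ψ) :
    eN r (fun x => ∫⁻ y, φ (x - y) * ψ y) ≤ eN p φ * eN q ψ := by
  have hp0 : p ≠ 0 := fun h => by simp [h] at hp
  have hq0 : q ≠ 0 := fun h => by simp [h] at hq
  have hr0 : r ≠ 0 := fun h => by simp [h] at hr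
  have htransφ : ∀ (x : EuclideanSpace ℝ (Fin d)) (e : ℝ),
      ∫⁻ y, φ (x - y) ^ e = ∫⁻ z, φ z ^ e := fun x e =>
    (Measure.measurePreserving_sub_left volume x).lintegral_comp (hφ.pow_const e)
  by_cases hrtop : r = ∞
  · -- Hölder case
    subst hrtop
    have hpq : 1/p + 1/q = 1 := by simpa using hpqr
    have bound : ∀ x, (∫⁻ y, φ (x - y) * ψ y) ≤ eN p φ * eN q ψ := by
      intro x
      by_cases hptop : p = ∞
      · subst hptop
        have hq1 : q = 1 := by
          rw [ENNReal.div_top, zero_add, one_div, ENNReal.inv_eq_one] at hpq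
          exact hpq
        subst hq1
        calc (∫⁻ y, φ (x - y) * ψ y) ≤ ∫⁻ y, essSup φ volume * ψ y := by
              refine lintegral_mono_ae ?_
              filter_upwards [(quasiMeasurePreserving_sub_left_of_right_invariant volume x).ae
                (ae_le_essSup (f := φ))] with y hy
              exact mul_le_mul_left hy _
          _ = essSup φ volume * ∫⁻ y, ψ y := lintegral_const_mul'' _ hψ.aemeasurable
          _ = eN ∞ φ * eN 1 ψ := by rw [eN_top, eN_one]
      · by_cases hqtop : q = ∞
        · have hp1 : p = 1 := by
            rw [hqtop, ENNReal.div_top, add_zero, one_div, ENNReal.inv_eq_one] at hpq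
            exact hpq
          subst hp1; subst hqtop
          calc (∫⁻ y, φ (x - y) * ψ y) ≤ ∫⁻ y, φ (x - y) * essSup ψ volume := by
                refine lintegral_mono_ae ?_
                filter_upwards [ae_le_essSup (f := ψ)] with y hy
                exact mul_le_mul_right hy _
            _ = (∫⁻ y, φ (x - y)) * essSup ψ volume :=
                lintegral_mul_const'' _
                  ((hφ.comp (measurable_const.sub measurable_id)).aemeasurable)
            _ = eN 1 φ * eN ∞ ψ := by
                have h1 := htransφ x 1
                simp only [ENNReal.rpow_one] at h1
                rw [eN_one, eN_top, ← h1]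
        · -- conjugate exponents, both finite
          have h1p : (1:ℝ≥0∞)/p ≠ ∞ := by
            rw [one_div]; exact ENNReal.inv_ne_top.mpr hp0
          have hident : 1/p.toReal + 1/q.toReal = 1 := by
            have := congrArg ENNReal.toReal hpq
            rwa [ENNReal.toReal_add h1p (by rw [one_div]; exact ENNReal.inv_ne_top.mpr hq0),
              ENNReal.toReal_div, ENNReal.toReal_div, ENNReal.toReal_one] at this
          have hpr1 : 1 ≤ p.toReal := by
            rw [← ENNReal.toReal_one]; exact ENNReal.toReal_mono hptop hp
          have hqrpos : 0 < q.toReal := ENNReal.toReal_pos hq0 hqtop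
          have hprlt : 1 < p.toReal := by
            rcases eq_or_lt_of_le hpr1 with h | h
            · exfalso
              rw [← h] at hident
              have : 1/q.toReal = 0 := by linarith
              rw [div_eq_zero_iff] at this
              rcases this with h' | h' <;> [linarith; linarith]
            · exact h
          have hconj : p.toReal.HolderConjugate q.toReal :=
            Real.holderConjugate_iff.mpr ⟨hprlt, by rw [← one_div, ← one_div]; exact hident⟩
          have H := ENNReal.lintegral_mul_le_Lp_mul_Lq volume hconj
            ((hφ.comp (measurable_const.sub measurable_id)).aemeasurable
              (μ := volume) : AEMeasurable (fun y => φ (x - y)) volume)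
            hψ.aemeasurable
          simp only [Pi.mul_apply] at H
          calc (∫⁻ y, φ (x - y) * ψ y)
              ≤ (∫⁻ y, φ (x - y) ^ p.toReal) ^ (1/p.toReal) *
                (∫⁻ y, ψ y ^ q.toReal) ^ (1/q.toReal) := H
            _ = eN p φ * eN q ψ := by
                rw [htransφ x p.toReal, eN_ne_top hptop, eN_ne_top hqtop]
    rw [eN_top]
    exact essSup_le_of_ae_le _ (Filter.Eventually.of_forall bound)
  · -- r finite
    have h1r : (1:ℝ≥0∞)/r ≠ 0 := by
      rw [one_div]; exact ENNReal.inv_ne_zero.mpr hrtop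
    have hptop : p ≠ ∞ := by
      intro h; subst h
      rw [ENNReal.div_top, zero_add] at hpqr
      have h2 : (1:ℝ≥0∞)/q ≤ 1 := by
        rw [one_div]; exact ENNReal.inv_le_one.mpr hq
      rw [hpqr] at h2
      have h3 : (1:ℝ≥0∞) + 1/r ≤ 1 + 0 := by simpa using h2
      have := (WithTop.add_le_add_iff_left (by norm_num : (1:ℝ≥0∞) ≠ ⊤)).mp h3
      exact h1r (le_antisymm this zero_le)
    have hqtop : q ≠ ∞ := by
      intro h; subst h
      rw [ENNReal.div_top, add_zero] at hpqr
      have h2 : (1:ℝ≥0∞)/p ≤ 1 := by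
        rw [one_div]; exact ENNReal.inv_le_one.mpr hp
      rw [hpqr] at h2
      have h3 : (1:ℝ≥0∞) + 1/r ≤ 1 + 0 := by simpa using h2
      have := (WithTop.add_le_add_iff_left (by norm_num : (1:ℝ≥0∞) ≠ ⊤)).mp h3
      exact h1r (le_antisymm this zero_le)
    set pr := p.toReal with hprdef
    set qr := q.toReal with hqrdef
    set rr := r.toReal with hrrdef
    have hprpos : 0 < pr := ENNReal.toReal_pos hp0 hptop
    have hqrpos : 0 < qr := ENNReal.toReal_pos hq0 hqtop
    have hrrpos : 0 < rr := ENNReal.toReal_pos hr0 hrtop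
    have hpr1 : 1 ≤ pr := by
      rw [hprdef, ← ENNReal.toReal_one]; exact ENNReal.toReal_mono hptop hp
    have hqr1 : 1 ≤ qr := by
      rw [hqrdef, ← ENNReal.toReal_one]; exact ENNReal.toReal_mono hqtop hq
    have hident : 1/pr + 1/qr = 1 + 1/rr := by
      have := congrArg ENNReal.toReal hpqr
      rwa [ENNReal.toReal_add (by rw [one_div]; exact ENNReal.inv_ne_top.mpr hp0)
          (by rw [one_div]; exact ENNReal.inv_ne_top.mpr hq0),
        ENNReal.toReal_add (by norm_num) (by rw [one_div]; exact ENNReal.inv_ne_top.mpr hr0),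
        ENNReal.toReal_div, ENNReal.toReal_div, ENNReal.toReal_div, ENNReal.toReal_one] at this
    set a := 1/rr with hadef
    set b := 1/pr - 1/rr with hbdef
    set c := 1/qr - 1/rr with hcdef
    have ha : 0 < a := by positivity
    have hb : 0 ≤ b := by
      have : 1/qr ≤ 1 := by
        rw [div_le_one hqrpos]; exact hqr1
      rw [hbdef]; linarith
    have hc : 0 ≤ c := by
      have : 1/pr ≤ 1 := by
        rw [div_le_one hprpos]; exact hpr1
      rw [hcdef]; linarith
    have habc : a + b + c = 1 := by rw [hadef, hbdef, hcdef]; linarith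
    set I0 := ∫⁻ z, φ z ^ pr with hI0def
    set J0 := ∫⁻ z, ψ z ^ qr with hJ0def
    have eNp : eN p φ = I0 ^ (1/pr) := by rw [eN_ne_top hptop]
    have eNq : eN q ψ = J0 ^ (1/qr) := by rw [eN_ne_top hqtop]
    by_cases hI0 : I0 = 0
    · -- φ = 0 a.e.
      have hφ0 : φ =ᵐ[volume] 0 := by
        have h := (lintegral_eq_zero_iff (hφ.pow_const pr)).mp hI0
        filter_upwards [h] with z hz
        simp only [Pi.zero_apply] at hz ⊢
        rcases (ENNReal.rpow_eq_zero_iff).mp hz with ⟨h', _⟩ | ⟨_, h'⟩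
        · exact h'
        · linarith
      have hconv : (fun x => ∫⁻ y, φ (x - y) * ψ y) = fun _ => 0 := by
        funext x
        rw [← lintegral_zero]
        refine lintegral_congr_ae ?_
        filter_upwards [(quasiMeasurePreserving_sub_left_of_right_invariant volume x).ae_eq
          hφ0] with y hy
        simp only [Function.comp_apply, Pi.zero_apply] at hy
        rw [hy, zero_mul]
      rw [hconv, eN_ne_top hrtop]
      rw [ENNReal.zero_rpow_of_pos hrrpos, lintegral_zero,
        ENNReal.zero_rpow_of_pos (by positivity)]
      exact zero_le
    · by_cases hJ0 : J0 = 0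
      · have hψ0 : ψ =ᵐ[volume] 0 := by
          have h := (lintegral_eq_zero_iff (hψ.pow_const qr)).mp hJ0
          filter_upwards [h] with z hz
          simp only [Pi.zero_apply] at hz ⊢
          rcases (ENNReal.rpow_eq_zero_iff).mp hz with ⟨h', _⟩ | ⟨_, h'⟩
          · exact h'
          · linarith
        have hconv : (fun x => ∫⁻ y, φ (x - y) * ψ y) = fun _ => 0 := by
          funext x
          rw [← lintegral_zero]
          refine lintegral_congr_ae ?_
          filter_upwards [hψ0] with y hy
          simp only [Pi.zero_apply] at hy
          rw [hy, mul_zero]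
        rw [hconv, eN_ne_top hrtop]
        rw [ENNReal.zero_rpow_of_pos hrrpos, lintegral_zero,
          ENNReal.zero_rpow_of_pos (by positivity)]
        exact zero_le
      · by_cases hItop : I0 = ∞
        · rw [eNp, eNq, hItop, ENNReal.top_rpow_of_pos (by positivity)]
          rw [ENNReal.top_mul]
          · exact le_top
          · intro h
            rcases ENNReal.rpow_eq_zero_iff.mp h with ⟨h', _⟩ | ⟨_, h'⟩
            · exact hJ0 h'
            · have : (0:ℝ) < 1/qr := by positivity
              linarith
        · by_cases hJtop : J0 = ∞
          · rw [eNp, eNq, hJtop, ENNReal.top_rpow_of_pos (by positivity)]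
            rw [ENNReal.mul_top]
            · exact le_top
            · intro h
              rcases ENNReal.rpow_eq_zero_iff.mp h with ⟨h', _⟩ | ⟨_, h'⟩
              · exact hI0 h'
              · have : (0:ℝ) < 1/pr := by positivity
                linarith
          · -- main case : 0 < I0, J0 < ∞
            set T := fun x => ∫⁻ y, φ (x - y) ^ pr * ψ y ^ qr with hTdef
            have step1 : ∀ x, (∫⁻ y, φ (x - y) * ψ y) ≤ T x ^ a * I0 ^ b * J0 ^ c := by
              intro x
              have hmx : Measurable fun y => φ (x - y) :=
                hφ.comp (measurable_const.sub measurable_id)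
              have hident2 : ∀ y, φ (x - y) * ψ y =
                  (φ (x - y) ^ pr * ψ y ^ qr) ^ a * (φ (x - y) ^ pr) ^ b * (ψ y ^ qr) ^ c := by
                intro y
                have e1 : pr * a + pr * b = 1 := by
                  rw [hadef, hbdef]; field_simp; ring
                have e2 : qr * a + qr * c = 1 := by
                  rw [hadef, hcdef]; field_simp; ring
                calc φ (x - y) * ψ y = φ (x - y) ^ (pr * a + pr * b) * ψ y ^ (qr * a + qr * c) := by
                      rw [e1, e2, ENNReal.rpow_one, ENNReal.rpow_one]
                  _ = (φ (x - y) ^ (pr * a) * φ (x - y) ^ (pr * b)) *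
                      (ψ y ^ (qr * a) * ψ y ^ (qr * c)) := by
                      rw [ENNReal.rpow_add_of_nonneg _ _ (by positivity) (by positivity),
                        ENNReal.rpow_add_of_nonneg _ _ (by positivity) (by positivity)]
                  _ = (φ (x - y) ^ (pr * a) * ψ y ^ (qr * a)) * φ (x - y) ^ (pr * b) *
                      ψ y ^ (qr * c) := by ring
                  _ = (φ (x - y) ^ pr * ψ y ^ qr) ^ a * (φ (x - y) ^ pr) ^ b *
                      (ψ y ^ qr) ^ c := by
                      rw [ENNReal.mul_rpow_of_nonneg _ _ ha.le, ← ENNReal.rpow_mul,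
                        ← ENNReal.rpow_mul, ← ENNReal.rpow_mul, ← ENNReal.rpow_mul]
              calc (∫⁻ y, φ (x - y) * ψ y)
                  = ∫⁻ y, (φ (x - y) ^ pr * ψ y ^ qr) ^ a * (φ (x - y) ^ pr) ^ b *
                      (ψ y ^ qr) ^ c := lintegral_congr fun y => hident2 y
                _ ≤ (∫⁻ y, φ (x - y) ^ pr * ψ y ^ qr) ^ a * (∫⁻ y, φ (x - y) ^ pr) ^ b *
                      (∫⁻ y, ψ y ^ qr) ^ c :=
                    lintegral_mul_rpow_le₃
                      (((hmx.pow_const pr).mul (hψ.pow_const qr)).aemeasurable)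
                      ((hmx.pow_const pr).aemeasurable)
                      ((hψ.pow_const qr).aemeasurable) ha.le hb hc habc
                _ = T x ^ a * I0 ^ b * J0 ^ c := by rw [htransφ x pr]
            have step3 : (∫⁻ x, (∫⁻ y, φ (x - y) * ψ y) ^ rr) ≤
                (∫⁻ x, T x) * I0 ^ (b * rr) * J0 ^ (c * rr) := by
              have h2 : ∀ x, (∫⁻ y, φ (x - y) * ψ y) ^ rr ≤
                  T x * I0 ^ (b * rr) * J0 ^ (c * rr) := by
                intro x
                calc (∫⁻ y, φ (x - y) * ψ y) ^ rr ≤ (T x ^ a * I0 ^ b * J0 ^ c) ^ rr :=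
                      ENNReal.rpow_le_rpow (step1 x) hrrpos.le
                  _ = (T x ^ a) ^ rr * (I0 ^ b) ^ rr * (J0 ^ c) ^ rr := by
                      rw [ENNReal.mul_rpow_of_nonneg _ _ hrrpos.le,
                        ENNReal.mul_rpow_of_nonneg _ _ hrrpos.le]
                  _ = T x ^ (a * rr) * I0 ^ (b * rr) * J0 ^ (c * rr) := by
                      rw [← ENNReal.rpow_mul, ← ENNReal.rpow_mul, ← ENNReal.rpow_mul]
                  _ = T x * I0 ^ (b * rr) * J0 ^ (c * rr) := by
                      rw [show a * rr = 1 by rw [hadef]; field_simp, ENNReal.rpow_one]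
              calc (∫⁻ x, (∫⁻ y, φ (x - y) * ψ y) ^ rr)
                  ≤ ∫⁻ x, T x * I0 ^ (b * rr) * J0 ^ (c * rr) := lintegral_mono h2
                _ = (∫⁻ x, T x) * I0 ^ (b * rr) * J0 ^ (c * rr) := by
                    rw [lintegral_mul_const' _ _
                        (ENNReal.rpow_ne_top_of_nonneg (by positivity) hJtop),
                      lintegral_mul_const' _ _
                        (ENNReal.rpow_ne_top_of_nonneg (by positivity) hItop)]
            have step4 : (∫⁻ x, T x) = I0 * J0 := by
              rw [hTdef]
              have hFmeas : Measurable fun z : (EuclideanSpace ℝ (Fin d)) ×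
                  (EuclideanSpace ℝ (Fin d)) => φ (z.1 - z.2) ^ pr * ψ z.2 ^ qr :=
                ((hφ.comp (measurable_fst.sub measurable_snd)).pow_const pr).mul
                  ((hψ.comp measurable_snd).pow_const qr)
              rw [lintegral_lintegral_swap hFmeas.aemeasurable]
              have inner : ∀ y, (∫⁻ x, φ (x - y) ^ pr * ψ y ^ qr) = I0 * ψ y ^ qr := by
                intro y
                have hmy : Measurable fun x => φ (x - y) ^ pr :=
                  (hφ.comp (measurable_id.sub measurable_const)).pow_const pr
                rw [lintegral_mul_const'' _ hmy.aemeasurable]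
                congr 1
                exact (measurePreserving_sub_right volume y).lintegral_comp (hφ.pow_const pr)
              calc (∫⁻ y, ∫⁻ x, φ (x - y) ^ pr * ψ y ^ qr) = ∫⁻ y, I0 * ψ y ^ qr :=
                    lintegral_congr fun y => inner y
                _ = I0 * J0 := lintegral_const_mul' _ _ hItop
            -- conclude
            have final : (∫⁻ x, (∫⁻ y, φ (x - y) * ψ y) ^ rr) ≤
                I0 ^ (1 + b * rr) * J0 ^ (1 + c * rr) := by
              calc (∫⁻ x, (∫⁻ y, φ (x - y) * ψ y) ^ rr)
                  ≤ (I0 * J0) * I0 ^ (b * rr) * J0 ^ (c * rr) := by rw [← step4]; exact step3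
                _ = (I0 * I0 ^ (b * rr)) * (J0 * J0 ^ (c * rr)) := by ring
                _ = I0 ^ (1 + b * rr) * J0 ^ (1 + c * rr) := by
                    rw [ENNReal.rpow_add _ _ hI0 hItop, ENNReal.rpow_add _ _ hJ0 hJtop,
                      ENNReal.rpow_one, ENNReal.rpow_one]
            have e3 : (1 + b * rr) * (1/rr) = 1/pr := by
              rw [hbdef]; field_simp; ring
            have e4 : (1 + c * rr) * (1/rr) = 1/qr := by
              rw [hcdef]; field_simp; ring
            rw [eN_ne_top hrtop, eNp, eNq]
            calc ((∫⁻ x, (∫⁻ y, φ (x - y) * ψ y) ^ rr)) ^ (1/rr)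
                ≤ (I0 ^ (1 + b * rr) * J0 ^ (1 + c * rr)) ^ (1/rr) :=
                  ENNReal.rpow_le_rpow final (by positivity)
              _ = I0 ^ (1/pr) * J0 ^ (1/qr) := by
                  rw [ENNReal.mul_rpow_of_nonneg _ _ (by positivity), ← ENNReal.rpow_mul,
                    ← ENNReal.rpow_mul, e3, e4]

theorem eLpNorm_eq_eN {d : ℕ} {E : Type*} [NormedAddCommGroup E] {t : ℝ≥0∞} (ht : t ≠ 0)
    (F : EuclideanSpace ℝ (Fin d) → E) :
    eLpNorm F t volume = eN t (fun x => (‖F x‖₊ : ℝ≥0∞)) := by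
  by_cases htop : t = ∞
  · subst htop
    rw [eLpNorm_exponent_top, eN_top, eLpNormEssSup]; rfl
  · rw [eLpNorm_eq_lintegral_rpow_enorm_toReal ht htop, eN_ne_top htop]; rfl

theorem eN_mono {d : ℕ} (t : ℝ≥0∞) {h₁ h₂ : EuclideanSpace ℝ (Fin d) → ℝ≥0∞}
    (H : ∀ x, h₁ x ≤ h₂ x) : eN t h₁ ≤ eN t h₂ := by
  by_cases htop : t = ∞
  · subst htop
    rw [eN_top, eN_top]
    exact essSup_mono_ae (Filter.Eventually.of_forall H)
  · rw [eN_ne_top htop, eN_ne_top htop]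
    exact ENNReal.rpow_le_rpow
      (lintegral_mono fun x => ENNReal.rpow_le_rpow (H x) ENNReal.toReal_nonneg)
      (by positivity)

theorem eN_const_mul {d : ℕ} {t : ℝ≥0∞} (ht : 1 ≤ t) {c : ℝ≥0∞} (hc : c ≠ ∞)
    (h : EuclideanSpace ℝ (Fin d) → ℝ≥0∞) :
    eN t (fun x => c * h x) = c * eN t h := by
  have ht0 : t ≠ 0 := fun h' => by simp [h'] at ht
  by_cases htop : t = ∞
  · subst htop
    rw [eN_top, eN_top]
    exact ENNReal.essSup_const_mul
  · have htr : 0 < t.toReal := ENNReal.toReal_pos ht0 htop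
    rw [eN_ne_top htop, eN_ne_top htop]
    have : ∀ x, (c * h x) ^ t.toReal = c ^ t.toReal * h x ^ t.toReal := fun x =>
      ENNReal.mul_rpow_of_nonneg _ _ htr.le
    simp_rw [this]
    rw [lintegral_const_mul' _ _ (ENNReal.rpow_ne_top_of_nonneg htr.le hc),
      ENNReal.mul_rpow_of_nonneg _ _ (by positivity), ← ENNReal.rpow_mul,
      mul_one_div, div_self htr.ne', ENNReal.rpow_one]
theorem weighted_young_aux {d : ℕ} {E₁ E₂ E₃ : Type*}
    [NormedAddCommGroup E₁] [NormedSpace ℂ E₁] [NormedSpace ℝ E₁]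
    [NormedAddCommGroup E₂] [NormedSpace ℂ E₂] [NormedSpace ℝ E₂]
    [NormedAddCommGroup E₃] [NormedSpace ℂ E₃] [NormedSpace ℝ E₃] [CompleteSpace E₃]
    (B : E₁ →L[ℂ] E₂ →L[ℂ] E₃) (hB : ∀ x y, ‖B x y‖ ≤ ‖x‖ * ‖y‖)
    (p q r : ℝ≥0∞) (hp : 1 ≤ p) (hq : 1 ≤ q) (hr : 1 ≤ r)
    (hpqr : 1 / p + 1 / q = 1 + 1 / r)
    (s₁ s₂ s₃ : ℝ) (h13 : 0 ≤ s₁ + s₃) (h23 : 0 ≤ s₂ + s₃) (h12 : 0 ≤ s₁ + s₂)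
    (f : EuclideanSpace ℝ (Fin d) → E₁) (g : EuclideanSpace ℝ (Fin d) → E₂)
    (hf : StronglyMeasurable f) (hg : StronglyMeasurable g)
    (hfin : weightedLpNorm p s₁ f < ⊤) (hgfin : weightedLpNorm q s₂ g < ⊤) :
    (∀ᵐ x, Integrable (fun y => B (f (x - y)) (g y)) volume) ∧
      weightedLpNorm r (-s₃) (fun x => ∫ y, B (f (x - y)) (g y))
        ≤ ENNReal.ofReal (2 ^ (|s₁ / 2| + |s₂ / 2| + |(-s₃) / 2|)) *
            weightedLpNorm p s₁ f * weightedLpNorm q s₂ g := by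
  have hp0 : p ≠ 0 := fun h => by simp [h] at hp
  have hq0 : q ≠ 0 := fun h => by simp [h] at hq
  have hr0 : r ≠ 0 := fun h => by simp [h] at hr
  set C : ℝ := 2 ^ (|s₁ / 2| + |s₂ / 2| + |(-s₃) / 2|) with hCdef
  have hCpos : 0 < C := Real.rpow_pos_of_pos two_pos _
  -- continuity of weights
  have hwcont : ∀ t : ℝ, Continuous fun x : EuclideanSpace ℝ (Fin d) =>
      ((1 + ‖x‖ ^ 2) ^ (t / 2) : ℝ) := by
    intro t
    refine Continuous.rpow_const ?_ fun x => Or.inl (by positivity)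
    exact continuous_const.add ((continuous_norm).pow 2)
  -- the weighted norm functions
  set Φ : EuclideanSpace ℝ (Fin d) → ℝ≥0∞ :=
    fun z => (‖((1 + ‖z‖ ^ 2) ^ (s₁ / 2) : ℝ) • f z‖₊ : ℝ≥0∞) with hΦdef
  set Ψ : EuclideanSpace ℝ (Fin d) → ℝ≥0∞ :=
    fun z => (‖((1 + ‖z‖ ^ 2) ^ (s₂ / 2) : ℝ) • g z‖₊ : ℝ≥0∞) with hΨdef
  have hΦm : Measurable Φ := ((hwcont s₁).stronglyMeasurable.smul hf).enorm
  have hΨm : Measurable Ψ := ((hwcont s₂).stronglyMeasurable.smul hg).enorm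
  have hNp : weightedLpNorm p s₁ f = eN p Φ := eLpNorm_eq_eN hp0 _
  have hNq : weightedLpNorm q s₂ g = eN q Ψ := eLpNorm_eq_eN hq0 _
  have hΦprod : ∀ z, Φ z = ENNReal.ofReal ((1 + ‖z‖ ^ 2) ^ (s₁ / 2)) * (‖f z‖₊ : ℝ≥0∞) := by
    intro z
    simp only [hΦdef]
    rw [nnnorm_smul, ENNReal.coe_mul, ← enorm_eq_nnnorm, Real.enorm_eq_ofReal (by positivity)]
  have hΨprod : ∀ z, Ψ z = ENNReal.ofReal ((1 + ‖z‖ ^ 2) ^ (s₂ / 2)) * (‖g z‖₊ : ℝ≥0∞) := by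
    intro z
    simp only [hΨdef]
    rw [nnnorm_smul, ENNReal.coe_mul, ← enorm_eq_nnnorm, Real.enorm_eq_ofReal (by positivity)]
  -- weight inequality, ENNReal version
  have hW : ∀ x y : EuclideanSpace ℝ (Fin d),
      ENNReal.ofReal ((1 + ‖x‖ ^ 2) ^ ((-s₃) / 2)) ≤
      ENNReal.ofReal C * (ENNReal.ofReal ((1 + ‖x - y‖ ^ 2) ^ (s₁ / 2)) *
        ENNReal.ofReal ((1 + ‖y‖ ^ 2) ^ (s₂ / 2))) := by
    intro x y
    have h := weight_ineq (a := s₁ / 2) (b := s₂ / 2) (c := (-s₃) / 2)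
      (by linarith) (by linarith) (by linarith) (x - y) y
    rw [sub_add_cancel] at h
    calc ENNReal.ofReal ((1 + ‖x‖ ^ 2) ^ ((-s₃) / 2))
        ≤ ENNReal.ofReal (C * (1 + ‖x - y‖ ^ 2) ^ (s₁ / 2) * (1 + ‖y‖ ^ 2) ^ (s₂ / 2)) :=
          ENNReal.ofReal_le_ofReal h
      _ = ENNReal.ofReal C * (ENNReal.ofReal ((1 + ‖x - y‖ ^ 2) ^ (s₁ / 2)) *
            ENNReal.ofReal ((1 + ‖y‖ ^ 2) ^ (s₂ / 2))) := by
          rw [ENNReal.ofReal_mul (by positivity), ENNReal.ofReal_mul hCpos.le, mul_assoc]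
  -- bilinear bound in ℝ≥0∞
  have hBenorm : ∀ (u : E₁) (v : E₂),
      (‖B u v‖₊ : ℝ≥0∞) ≤ (‖u‖₊ : ℝ≥0∞) * (‖v‖₊ : ℝ≥0∞) := by
    intro u v
    rw [← ENNReal.coe_mul]
    refine ENNReal.coe_le_coe.mpr ?_
    rw [← NNReal.coe_le_coe]
    push_cast
    exact hB u v
  -- pointwise key inequality
  have hkey : ∀ x y : EuclideanSpace ℝ (Fin d),
      ENNReal.ofReal ((1 + ‖x‖ ^ 2) ^ ((-s₃) / 2)) * (‖B (f (x - y)) (g y)‖₊ : ℝ≥0∞) ≤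
      (ENNReal.ofReal C * Φ (x - y)) * Ψ y := by
    intro x y
    calc ENNReal.ofReal ((1 + ‖x‖ ^ 2) ^ ((-s₃) / 2)) * (‖B (f (x - y)) (g y)‖₊ : ℝ≥0∞)
        ≤ (ENNReal.ofReal C * (ENNReal.ofReal ((1 + ‖x - y‖ ^ 2) ^ (s₁ / 2)) *
            ENNReal.ofReal ((1 + ‖y‖ ^ 2) ^ (s₂ / 2)))) *
            ((‖f (x - y)‖₊ : ℝ≥0∞) * (‖g y‖₊ : ℝ≥0∞)) :=
          mul_le_mul' (hW x y) (hBenorm _ _)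
      _ = (ENNReal.ofReal C * (ENNReal.ofReal ((1 + ‖x - y‖ ^ 2) ^ (s₁ / 2)) *
            (‖f (x - y)‖₊ : ℝ≥0∞))) * (ENNReal.ofReal ((1 + ‖y‖ ^ 2) ^ (s₂ / 2)) *
            (‖g y‖₊ : ℝ≥0∞)) := by ring
      _ = (ENNReal.ofReal C * Φ (x - y)) * Ψ y := by rw [hΦprod, hΨprod]
  -- integrated key inequality
  have hTT : ∀ x : EuclideanSpace ℝ (Fin d),
      ENNReal.ofReal ((1 + ‖x‖ ^ 2) ^ ((-s₃) / 2)) *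
        (∫⁻ y, (‖B (f (x - y)) (g y)‖₊ : ℝ≥0∞)) ≤
      ∫⁻ y, (ENNReal.ofReal C * Φ (x - y)) * Ψ y := by
    intro x
    rw [← lintegral_const_mul' _ _ ENNReal.ofReal_ne_top]
    exact lintegral_mono fun y => hkey x y
  -- pointwise bound on the weighted convolution
  have hptnorm : ∀ x : EuclideanSpace ℝ (Fin d),
      (‖((1 + ‖x‖ ^ 2) ^ (-s₃ / 2) : ℝ) • ∫ y, B (f (x - y)) (g y)‖₊ : ℝ≥0∞) ≤
      ∫⁻ y, (ENNReal.ofReal C * Φ (x - y)) * Ψ y := by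
    intro x
    calc (‖((1 + ‖x‖ ^ 2) ^ (-s₃ / 2) : ℝ) • ∫ y, B (f (x - y)) (g y)‖₊ : ℝ≥0∞)
        = ENNReal.ofReal ((1 + ‖x‖ ^ 2) ^ ((-s₃) / 2)) *
            (‖∫ y, B (f (x - y)) (g y)‖₊ : ℝ≥0∞) := by
          rw [nnnorm_smul, ENNReal.coe_mul, ← enorm_eq_nnnorm, Real.enorm_eq_ofReal (by positivity)]
      _ ≤ ENNReal.ofReal ((1 + ‖x‖ ^ 2) ^ ((-s₃) / 2)) *
            ∫⁻ y, (‖B (f (x - y)) (g y)‖₊ : ℝ≥0∞) :=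
          mul_le_mul_right (enorm_integral_le_lintegral_enorm _) _
      _ ≤ _ := hTT x
  -- Young's inequality
  have hyoung := young_conv (d := d) (φ := fun z => ENNReal.ofReal C * Φ z) hp hq hr hpqr
    (measurable_const.mul hΦm : Measurable fun z => ENNReal.ofReal C * Φ z) hΨm
  have hprod : eN p (fun z => ENNReal.ofReal C * Φ z) * eN q Ψ =
      ENNReal.ofReal C * eN p Φ * eN q Ψ := by
    rw [eN_const_mul hp ENNReal.ofReal_ne_top]
  have hfinH : eN r (fun x => ∫⁻ y, (ENNReal.ofReal C * Φ (x - y)) * Ψ y) < ⊤ := by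
    refine lt_of_le_of_lt hyoung ?_
    rw [hprod, ← hNp, ← hNq]
    exact ENNReal.mul_lt_top (ENNReal.mul_lt_top ENNReal.ofReal_lt_top hfin) hgfin
  -- a.e. finiteness of the dominating convolution
  have hHmeas : Measurable fun x => ∫⁻ y, (ENNReal.ofReal C * Φ (x - y)) * Ψ y := by
    have : Measurable fun z : (EuclideanSpace ℝ (Fin d)) × (EuclideanSpace ℝ (Fin d)) =>
        (ENNReal.ofReal C * Φ (z.1 - z.2)) * Ψ z.2 :=
      (measurable_const.mul (hΦm.comp (measurable_fst.sub measurable_snd))).mul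
        (hΨm.comp measurable_snd)
    exact this.lintegral_prod_right'
  have haefin : ∀ᵐ x, (∫⁻ y, (ENNReal.ofReal C * Φ (x - y)) * Ψ y) < ⊤ := by
    by_cases hrtop : r = ∞
    · subst hrtop
      rw [eN_top] at hfinH
      filter_upwards [ae_le_essSup
        (f := fun x => ∫⁻ y, (ENNReal.ofReal C * Φ (x - y)) * Ψ y)] with x hx
      exact lt_of_le_of_lt hx hfinH
    · rw [eN_ne_top hrtop] at hfinH
      have hrr : 0 < r.toReal := ENNReal.toReal_pos hr0 hrtop
      have hne : (∫⁻ x, (∫⁻ y, (ENNReal.ofReal C * Φ (x - y)) * Ψ y) ^ r.toReal) ≠ ⊤ := by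
        intro h
        rw [h, ENNReal.top_rpow_of_pos (by positivity)] at hfinH
        exact (lt_irrefl _) hfinH
      filter_upwards [ae_lt_top (hHmeas.pow_const r.toReal) hne] with x hx
      exact (ENNReal.rpow_lt_top_iff_of_pos hrr).mp hx
  constructor
  · -- a.e. integrability
    filter_upwards [haefin] with x hx
    refine ⟨hf.aestronglyMeasurable.convolution_integrand_swap_snd B hg.aestronglyMeasurable x, ?_⟩
    have hW3 : (0:ℝ≥0∞) < ENNReal.ofReal ((1 + ‖x‖ ^ 2) ^ ((-s₃) / 2)) :=
      ENNReal.ofReal_pos.mpr (Real.rpow_pos_of_pos (by positivity) _)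
    show (∫⁻ y, (‖B (f (x - y)) (g y)‖₊ : ℝ≥0∞)) < ⊤
    by_contra hcon
    rw [not_lt, top_le_iff] at hcon
    have h2 := hTT x
    rw [hcon, ENNReal.mul_top hW3.ne'] at h2
    exact (lt_irrefl _) (lt_of_le_of_lt h2 hx)
  · -- the norm inequality
    calc weightedLpNorm r (-s₃) (fun x => ∫ y, B (f (x - y)) (g y))
        = eN r (fun x =>
            (‖((1 + ‖x‖ ^ 2) ^ (-s₃ / 2) : ℝ) • ∫ y, B (f (x - y)) (g y)‖₊ : ℝ≥0∞)) :=
          eLpNorm_eq_eN hr0 _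
      _ ≤ eN r (fun x => ∫⁻ y, (ENNReal.ofReal C * Φ (x - y)) * Ψ y) := eN_mono _ hptnorm
      _ ≤ eN p (fun z => ENNReal.ofReal C * Φ z) * eN q Ψ := hyoung
      _ = ENNReal.ofReal C * eN p Φ * eN q Ψ := hprod
      _ = ENNReal.ofReal C * weightedLpNorm p s₁ f * weightedLpNorm q s₂ g := by
          rw [hNp, hNq]
theorem weighted_young_inequality (d : ℕ) (hd : 1 ≤ d)
    (E₁ E₂ E₃ : Type*)
    [NormedAddCommGroup E₁] [NormedSpace ℂ E₁] [CompleteSpace E₁]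
    [NormedAddCommGroup E₂] [NormedSpace ℂ E₂] [CompleteSpace E₂]
    [NormedAddCommGroup E₃] [NormedSpace ℂ E₃] [CompleteSpace E₃]
    (B : E₁ →L[ℂ] E₂ →L[ℂ] E₃) (hB : ∀ x y, ‖B x y‖ ≤ ‖x‖ * ‖y‖)
    (p q r : ℝ≥0∞) (hp : 1 ≤ p) (hq : 1 ≤ q) (hr : 1 ≤ r)
    (hpqr : 1 / p + 1 / q = 1 + 1 / r)
    (s₁ s₂ s₃ : ℝ) (h13 : 0 ≤ s₁ + s₃) (h23 : 0 ≤ s₂ + s₃) (h12 : 0 ≤ s₁ + s₂) :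
    ∃ C > 0, ∀ (f : EuclideanSpace ℝ (Fin d) → E₁) (g : EuclideanSpace ℝ (Fin d) → E₂),
      AEStronglyMeasurable f volume → AEStronglyMeasurable g volume →
      weightedLpNorm p s₁ f < ⊤ → weightedLpNorm q s₂ g < ⊤ →
      (∀ᵐ x, Integrable (fun y => B (f (x - y)) (g y)) volume) ∧
        weightedLpNorm r (-s₃) (fun x => ∫ y, B (f (x - y)) (g y))
          ≤ ENNReal.ofReal C * weightedLpNorm p s₁ f * weightedLpNorm q s₂ g := by
  refine ⟨2 ^ (|s₁ / 2| + |s₂ / 2| + |(-s₃) / 2|), Real.rpow_pos_of_pos two_pos _, ?_⟩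
  intro f g hf hg hfin hgfin
  obtain ⟨f', hf'm, hff'⟩ := hf
  obtain ⟨g', hg'm, hgg'⟩ := hg
  have hsect : ∀ x, (fun y => B (f (x - y)) (g y)) =ᵐ[volume]
      fun y => B (f' (x - y)) (g' y) := by
    intro x
    have h1 := (quasiMeasurePreserving_sub_left_of_right_invariant volume x).ae_eq hff'
    filter_upwards [h1, hgg'] with y e1 e2
    simp only [Function.comp_apply] at e1
    rw [e1, e2]
  have hfeq : weightedLpNorm p s₁ f = weightedLpNorm p s₁ f' :=
    eLpNorm_congr_ae (hff'.mono fun x hx => by dsimp only; rw [hx])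
  have hgeq : weightedLpNorm q s₂ g = weightedLpNorm q s₂ g' :=
    eLpNorm_congr_ae (hgg'.mono fun x hx => by dsimp only; rw [hx])
  have hceq : weightedLpNorm r (-s₃) (fun x => ∫ y, B (f (x - y)) (g y)) =
      weightedLpNorm r (-s₃) (fun x => ∫ y, B (f' (x - y)) (g' y)) := by
    refine eLpNorm_congr_ae (Filter.Eventually.of_forall fun x => ?_)
    dsimp only
    rw [integral_congr_ae (hsect x)]
  obtain ⟨h1, h2⟩ := weighted_young_aux B hB p q r hp hq hr hpqr s₁ s₂ s₃ h13 h23 h12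
    f' g' hf'm hg'm (hfeq ▸ hfin) (hgeq ▸ hgfin)
  constructor
  · filter_upwards [h1] with x hx
    exact hx.congr (hsect x).symm
  · rw [hceq, hfeq, hgeq]
    exact h2
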